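/- (Sen's non-commutative union bound) Let ρ be a positive semidefinite operator with Tr[ρ] ≤ 1 and let P₁,…,P_k be orthogonal projectors on a finite-dimensional Hilbert space, with complementary projectors Q_i = 1 − P_i. Then Tr[P_k⋯P₁ ρ P₁⋯P_k] ≥ Tr[ρ] − 2√(Σ_{i=1}^k Tr[ρ Q_i]). -/

import Mathlib

open Matrix ComplexOrder BigOperators Finset

/-!
Give matrices the semi-inner product `⟪X, Y⟫ = tr (Y ρ Xᴴ)` of `ρ`. Left multiplication by a
Hermitian idempotent is then an orthogonal projection, and with `M = P_k ⋯ P_1` the three traces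
in the bound are `‖M 1‖²`, `‖1‖²` and `‖1 - P_i 1‖²`. So it suffices to show, for orthogonal
projections on any inner product space, `‖x‖² - ‖M x‖² ≤ 2 ‖x‖ √(∑ ‖x - P_i x‖²)`.
Since `‖x‖² - ‖M x‖² ≤ 2 Re ⟪x, x - M x⟫`, this follows from
`Re ⟪x, x - M x⟫ ≤ √(‖x‖² - ‖M x‖²) √(∑ ‖x - P_i x‖²)`, proved by induction on `k`:
writing `M = P M'` and `y = M' x`, the new term `Re ⟪x, y - P y⟫ = Re ⟪x - P x, y - P y⟫`
is at most `‖x - P x‖ ‖y - P y‖`, Pythagoras gives `‖y - P y‖² = ‖y‖² - ‖P y‖²`, and the two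
bounds are combined by the Cauchy–Schwarz inequality in `ℝ²`.
-/

noncomputable def traceNorm {d : Type*} [Fintype d] [DecidableEq d] (A : Matrix d d ℂ) : ℝ :=
  (((Matrix.posSemidef_conjTranspose_mul_self A).1.eigenvectorUnitary : Matrix d d ℂ) *
    diagonal (((↑) : ℝ → ℂ) ∘ Real.sqrt ∘ (Matrix.posSemidef_conjTranspose_mul_self A).1.eigenvalues) *
    (star ((Matrix.posSemidef_conjTranspose_mul_self A).1.eigenvectorUnitary : Matrix d d ℂ))).trace.re

noncomputable def traceDist {d : Type*} [Fintype d] [DecidableEq d] (A B : Matrix d d ℂ) : ℝ :=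
  traceNorm (A - B) / 2

theorem Real.sqrt_mul_sqrt_add_mul_le {u v : ℝ} (hu : 0 ≤ u) (hv : 0 ≤ v) (a b : ℝ) :
    √u * √v + a * b ≤ √(u + a ^ 2) * √(v + b ^ 2) := by
  rw [← Real.sqrt_mul (by positivity : 0 ≤ u + a ^ 2)]
  apply Real.le_sqrt_of_sq_le
  have key : (√u * √v + a * b) ^ 2 + (√u * b - a * √v) ^ 2 =
      (√u ^ 2 + a ^ 2) * (√v ^ 2 + b ^ 2) := by ring
  rw [Real.sq_sqrt hu, Real.sq_sqrt hv] at key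
  nlinarith [sq_nonneg (√u * b - a * √v)]

section

open scoped InnerProductSpace

variable {𝕜 E : Type*} [RCLike 𝕜] [SeminormedAddCommGroup E] [InnerProductSpace 𝕜 E]

namespace LinearMap.IsSymmetric

variable {P : E →ₗ[𝕜] E}

theorem inner_map_sub_map_eq_zero (hP : P.IsSymmetric) (hP2 : IsIdempotentElem P) (x y : E) :
    ⟪P x, y - P y⟫_𝕜 = 0 := by
  rw [hP, map_sub, ← Module.End.mul_apply, hP2.eq, sub_self, inner_zero_right]

theorem inner_sub_map_eq (hP : P.IsSymmetric) (hP2 : IsIdempotentElem P) (x y : E) :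
    ⟪x, y - P y⟫_𝕜 = ⟪x - P x, y - P y⟫_𝕜 := by
  rw [inner_sub_left, hP.inner_map_sub_map_eq_zero hP2, sub_zero]

theorem norm_sq_eq_norm_map_sq_add_norm_sub_map_sq (hP : P.IsSymmetric) (hP2 : IsIdempotentElem P) (x : E) :
    ‖x‖ ^ 2 = ‖P x‖ ^ 2 + ‖x - P x‖ ^ 2 := by
  have := norm_add_sq_eq_norm_sq_add_norm_sq_of_inner_eq_zero _ _
    (hP.inner_map_sub_map_eq_zero hP2 x x)
  rw [add_sub_cancel] at this
  simpa only [sq] using this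

theorem norm_map_le (hP : P.IsSymmetric) (hP2 : IsIdempotentElem P) (x : E) : ‖P x‖ ≤ ‖x‖ := by
  have := hP.norm_sq_eq_norm_map_sq_add_norm_sub_map_sq hP2 x
  nlinarith [norm_nonneg (P x), norm_nonneg x, sq_nonneg ‖x - P x‖]

end LinearMap.IsSymmetric

theorem norm_list_prod_apply_le {L : List (E →ₗ[𝕜] E)}
    (hL : ∀ P ∈ L, P.IsSymmetric ∧ IsIdempotentElem P) (x : E) : ‖L.prod x‖ ≤ ‖x‖ := by
  induction L with
  | nil => simp
  | cons P L ih =>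
    obtain ⟨hP, hP2⟩ := hL P List.mem_cons_self
    rw [List.prod_cons, Module.End.mul_apply]
    exact (hP.norm_map_le hP2 _).trans (ih fun Q hQ => hL Q (List.mem_cons_of_mem P hQ))

theorem re_inner_sub_list_prod_apply_le {L : List (E →ₗ[𝕜] E)}
    (hL : ∀ P ∈ L, P.IsSymmetric ∧ IsIdempotentElem P) (x : E) :
    RCLike.re ⟪x, x - L.prod x⟫_𝕜 ≤
      √(‖x‖ ^ 2 - ‖L.prod x‖ ^ 2) * √(L.map fun P => ‖x - P x‖ ^ 2).sum := by
  induction L with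
  | nil => simp
  | cons P L ih =>
    obtain ⟨hP, hP2⟩ := hL P List.mem_cons_self
    have hL' : ∀ Q ∈ L, Q.IsSymmetric ∧ IsIdempotentElem Q :=
      fun Q hQ => hL Q (List.mem_cons_of_mem P hQ)
    set y := L.prod x
    have hy : ‖y‖ ≤ ‖x‖ := norm_list_prod_apply_le hL' x
    have hsplit : x - P y = (x - y) + (y - P y) := by abel
    calc RCLike.re ⟪x, x - (P :: L).prod x⟫_𝕜
        = RCLike.re ⟪x, x - y⟫_𝕜 + RCLike.re ⟪x - P x, y - P y⟫_𝕜 := by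
          rw [List.prod_cons, Module.End.mul_apply, hsplit, inner_add_right, map_add,
            hP.inner_sub_map_eq hP2]
      _ ≤ √(‖x‖ ^ 2 - ‖y‖ ^ 2) * √(L.map fun P => ‖x - P x‖ ^ 2).sum
          + ‖y - P y‖ * ‖x - P x‖ := by
          gcongr
          · exact ih hL'
          · rw [mul_comm]; exact re_inner_le_norm _ _
      _ ≤ √(‖x‖ ^ 2 - ‖y‖ ^ 2 + ‖y - P y‖ ^ 2) *
            √((L.map fun P => ‖x - P x‖ ^ 2).sum + ‖x - P x‖ ^ 2) :=
          Real.sqrt_mul_sqrt_add_mul_le (by nlinarith [norm_nonneg y])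
            (List.sum_nonneg (by simp)) _ _
      _ = √(‖x‖ ^ 2 - ‖(P :: L).prod x‖ ^ 2) * √((P :: L).map fun P => ‖x - P x‖ ^ 2).sum := by
          rw [show (P :: L).prod x = P y from rfl, List.map_cons, List.sum_cons,
            add_comm (‖x - P x‖ ^ 2), hP.norm_sq_eq_norm_map_sq_add_norm_sub_map_sq hP2 y]
          ring_nf

theorem norm_sq_sub_norm_list_prod_apply_sq_le {L : List (E →ₗ[𝕜] E)}
    (hL : ∀ P ∈ L, P.IsSymmetric ∧ IsIdempotentElem P) (x : E) :
    ‖x‖ ^ 2 - ‖L.prod x‖ ^ 2 ≤ 2 * ‖x‖ * √(L.map fun P => ‖x - P x‖ ^ 2).sum := by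
  set δ := ‖x‖ ^ 2 - ‖L.prod x‖ ^ 2
  have hδ : δ ≤ 2 * √δ * √(L.map fun P => ‖x - P x‖ ^ 2).sum := by
    have := re_inner_sub_list_prod_apply_le hL x
    rw [inner_sub_right, map_sub, ← norm_sq_eq_re_inner] at this
    nlinarith [norm_sub_sq (𝕜 := 𝕜) x (L.prod x), sq_nonneg ‖x - L.prod x‖]
  have hδx : √δ ≤ ‖x‖ :=
    (Real.sqrt_le_left (norm_nonneg x)).2 (by linarith [sq_nonneg ‖L.prod x‖])
  calc δ ≤ 2 * √δ * √(L.map fun P => ‖x - P x‖ ^ 2).sum := hδ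
    _ ≤ 2 * ‖x‖ * √(L.map fun P => ‖x - P x‖ ^ 2).sum := by gcongr

namespace Matrix

variable {n : Type*} [Fintype n] [DecidableEq n] {ρ : Matrix n n 𝕜}

theorem re_trace_sub_re_trace_list_prod_mul_mul_conjTranspose_le (hρ : ρ.PosSemidef)
    {L : List (Matrix n n 𝕜)} (hL : ∀ P ∈ L, P.IsHermitian ∧ IsIdempotentElem P) :
    RCLike.re ρ.trace - RCLike.re (L.prod * ρ * L.prodᴴ).trace ≤
      2 * √(RCLike.re ρ.trace) * √(L.map fun P => RCLike.re (ρ * (1 - P)).trace).sum := by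
  let _ := ρ.toMatrixSeminormedAddCommGroup hρ
  let _ := ρ.toMatrixInnerProductSpace hρ
  have hnorm (X : Matrix n n 𝕜) : ‖X‖ ^ 2 = RCLike.re (X * ρ * Xᴴ).trace :=
    norm_sq_eq_re_inner (𝕜 := 𝕜) X
  have hproj : ∀ Q ∈ L.map (Algebra.lmul 𝕜 (Matrix n n 𝕜)),
      Q.IsSymmetric ∧ IsIdempotentElem Q := by
    simp only [List.mem_map]
    rintro _ ⟨P, hPL, rfl⟩
    obtain ⟨hPh, hPi⟩ := hL P hPL
    refine ⟨fun X Y => ?_, hPi.map _⟩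
    show (Y * ρ * (P * X)ᴴ).trace = (P * Y * ρ * Xᴴ).trace
    rw [conjTranspose_mul, hPh.eq, ← mul_assoc, trace_mul_comm, ← mul_assoc, ← mul_assoc]
  have hcompl : ∀ P ∈ L, ‖(1 : Matrix n n 𝕜) - P‖ ^ 2 = RCLike.re (ρ * (1 - P)).trace := by
    intro P hP
    obtain ⟨hPh, hPi⟩ := hL P hP
    rw [hnorm, conjTranspose_sub, conjTranspose_one, hPh.eq, mul_assoc, trace_mul_comm,
      mul_assoc, hPi.one_sub.eq]
  have hone : ‖(1 : Matrix n n 𝕜)‖ ^ 2 = RCLike.re ρ.trace := by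
    rw [hnorm, one_mul, conjTranspose_one, mul_one]
  have hsum : (L.map fun P => ‖(1 : Matrix n n 𝕜) - P‖ ^ 2).sum =
      (L.map fun P => RCLike.re (ρ * (1 - P)).trace).sum :=
    congrArg List.sum (List.map_congr_left hcompl)
  have key := norm_sq_sub_norm_list_prod_apply_sq_le hproj (1 : Matrix n n 𝕜)
  rw [← map_list_prod, List.map_map] at key
  simp only [Function.comp_def, Algebra.coe_lmul_eq_mul, LinearMap.mul_apply', mul_one] at key
  rwa [hsum, hone, hnorm, ← Real.sqrt_sq (norm_nonneg (1 : Matrix n n 𝕜)), hone] at key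

end Matrix

end

/-- Sen's non-commutative union bound. -/
theorem sen_noncommutative_union_bound {d : Type*} [Fintype d] [DecidableEq d]
    (ρ : Matrix d d ℂ) (hρ : ρ.PosSemidef) (hρtr : (ρ.trace).re ≤ 1)
    (k : ℕ) (P : Fin k → Matrix d d ℂ)
    (hP : ∀ i, (P i).IsHermitian) (hPproj : ∀ i, P i * P i = P i) :
    (((List.ofFn P).reverse.prod * ρ * (List.ofFn P).prod).trace).re ≥
      (ρ.trace).re -
        2 * Real.sqrt (∑ i, ((ρ * ((1 : Matrix d d ℂ) - P i)).trace).re) := by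
  have hL : ∀ Q ∈ (List.ofFn P).reverse, Q.IsHermitian ∧ IsIdempotentElem Q := by
    simp only [List.mem_reverse, List.mem_ofFn]
    rintro _ ⟨i, rfl⟩
    exact ⟨hP i, hPproj i⟩
  have hadj : (List.ofFn P).reverse.prodᴴ = (List.ofFn P).prod := by
    rw [conjTranspose_list_prod, List.map_reverse, List.reverse_reverse, List.map_ofFn]
    exact congrArg _ (congrArg List.ofFn (funext fun i => (hP i).eq))
  have key := re_trace_sub_re_trace_list_prod_mul_mul_conjTranspose_le hρ hL
  rw [hadj, List.map_reverse, List.sum_reverse, List.map_ofFn, List.sum_ofFn] at key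
  simp only [Function.comp_def, RCLike.re_to_complex] at key
  have htr : √(ρ.trace).re ≤ 1 := Real.sqrt_le_one.mpr hρtr
  nlinarith [Real.sqrt_nonneg (∑ i, ((ρ * ((1 : Matrix d d ℂ) - P i)).trace).re)]
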